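/- arXiv:2112.01124 — 5 statements merged into one kernel-verified Lean document; each statement's English description precedes it below -/
import Mathlib

section
/- Let G_D be the bipartite graph determined by a nonincreasing sequence D = (d₁,…,d_p) of positive integers (x_i adjacent to y_j iff j ≤ d_i). Then ρ(G_D) = ρ(H(D))^{1/2}, where H(D) = (min{d_i,d_j})_{1≤i,j≤p}. -/
open Matrix

noncomputable def specRad {n : Type*} [Fintype n] [DecidableEq n] (M : Matrix n n ℝ) : ℝ :=
  sSup (spectrum ℝ M)

section Aux

variable {m n : Type*} [Fintype m] [Fintype n] [DecidableEq m] [DecidableEq n]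

lemma aux_isUnit_fromBlocks_diag (M : Matrix m m ℝ) (N : Matrix n n ℝ) :
    IsUnit (fromBlocks M 0 0 N) ↔ IsUnit M ∧ IsUnit N := by
  rw [Matrix.isUnit_iff_isUnit_det, Matrix.det_fromBlocks_zero₂₁, IsUnit.mul_iff,
    ← Matrix.isUnit_iff_isUnit_det, ← Matrix.isUnit_iff_isUnit_det]

lemma aux_spectrum_fromBlocks_diag (M : Matrix m m ℝ) (N : Matrix n n ℝ) :
    spectrum ℝ (fromBlocks M 0 0 N) = spectrum ℝ M ∪ spectrum ℝ N := by
  ext x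
  have key : (algebraMap ℝ (Matrix (m ⊕ n) (m ⊕ n) ℝ)) x - fromBlocks M 0 0 N
      = fromBlocks ((algebraMap ℝ (Matrix m m ℝ)) x - M) 0 0
        ((algebraMap ℝ (Matrix n n ℝ)) x - N) := by
    ext (i | i) (j | j) <;>
      simp [Matrix.algebraMap_matrix_apply, Matrix.fromBlocks, Matrix.sub_apply]
  simp only [Set.mem_union, spectrum.mem_iff, key, aux_isUnit_fromBlocks_diag]
  tauto

lemma aux_spectrum_conj (S A : Matrix n n ℝ) (hS : S * S = 1) :
    spectrum ℝ (S * A * S) = spectrum ℝ A := by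
  ext x
  simp only [spectrum.mem_iff]
  have key : (algebraMap ℝ (Matrix n n ℝ)) x - S * A * S
      = S * ((algebraMap ℝ (Matrix n n ℝ)) x - A) * S := by
    rw [Matrix.mul_sub, Matrix.sub_mul]
    congr 1
    symm
    calc S * (algebraMap ℝ (Matrix n n ℝ) x) * S
        = (algebraMap ℝ (Matrix n n ℝ) x) * (S * S) := by
          rw [← Algebra.commutes x S, mul_assoc]
      _ = algebraMap ℝ (Matrix n n ℝ) x := by rw [hS, mul_one]
  rw [key]
  let u : (Matrix n n ℝ)ˣ := ⟨S, S, hS, hS⟩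
  rw [show S * ((algebraMap ℝ (Matrix n n ℝ)) x - A) * S
      = ↑u * ((algebraMap ℝ (Matrix n n ℝ)) x - A) * ↑u from rfl,
    Units.isUnit_mul_units, Units.isUnit_units_mul]

lemma aux_spectrum_mul_self (A : Matrix n n ℝ) (hA : A.IsHermitian) :
    spectrum ℝ (A * A) = (fun x : ℝ => x ^ 2) '' spectrum ℝ A := by
  have hU : (star (hA.eigenvectorUnitary : Matrix n n ℝ)) *
      (hA.eigenvectorUnitary : Matrix n n ℝ) = 1 := by
    simpa using (unitary.star_mul_self_of_mem (hA.eigenvectorUnitary).2)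
  have key : A * A = (hA.eigenvectorUnitary : Matrix n n ℝ) *
      diagonal (fun i => hA.eigenvalues i ^ 2) *
      (star (hA.eigenvectorUnitary : Matrix n n ℝ)) := by
    conv_lhs => rw [hA.spectral_theorem]
    set U : Matrix n n ℝ := (hA.eigenvectorUnitary : Matrix n n ℝ)
    set D : Matrix n n ℝ := diagonal (RCLike.ofReal ∘ hA.eigenvalues) with hD
    calc (U * D * star U) * (U * D * star U)
        = U * (D * ((star U * U) * (D * star U))) := by simp only [mul_assoc]
      _ = U * (D * D) * star U := by rw [hU, one_mul]; simp only [mul_assoc]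
      _ = U * diagonal (fun i => hA.eigenvalues i ^ 2) * star U := by
          rw [hD]
          congr 1
          congr 1
          rw [Matrix.diagonal_mul_diagonal]
          congr 1
          ext i
          simp [pow_two]
  rw [key, Unitary.spectrum_star_right_conjugate, spectrum_diagonal,
    hA.spectrum_real_eq_range_eigenvalues]
  exact Set.range_comp (fun x : ℝ => x ^ 2) hA.eigenvalues

lemma aux_spectrum_nonneg {M : Matrix n n ℝ} (hM : M.PosSemidef) :
    ∀ x ∈ spectrum ℝ M, 0 ≤ x := by
  intro x hx
  rw [hM.1.spectrum_real_eq_range_eigenvalues] at hx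
  obtain ⟨i, rfl⟩ := hx
  exact hM.eigenvalues_nonneg i

lemma aux_spectrum_nonempty [Nonempty n] {M : Matrix n n ℝ} (hM : M.IsHermitian) :
    (spectrum ℝ M).Nonempty := by
  rw [hM.spectrum_real_eq_range_eigenvalues]
  exact Set.range_nonempty _

lemma aux_csSup_eq {S T : Set ℝ} (hSf : S.Finite) (hTf : T.Finite)
    (hSn : S.Nonempty) (hTn : T.Nonempty) (hS0 : ∀ x ∈ S, 0 ≤ x) (hT0 : ∀ x ∈ T, 0 ≤ x)
    (h : S \ {0} = T \ {0}) : sSup S = sSup T := by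
  have key : ∀ (S T : Set ℝ), T.Finite → S.Nonempty → T.Nonempty → (∀ x ∈ T, 0 ≤ x) →
      S \ {0} = T \ {0} → sSup S ≤ sSup T := by
    intro S T hTf hSn hTn hT0 h
    apply csSup_le hSn
    intro x hx
    rcases eq_or_ne x 0 with rfl | hx0
    · obtain ⟨y, hy⟩ := hTn
      exact le_trans (hT0 y hy) (le_csSup hTf.bddAbove hy)
    · have hxT : x ∈ T \ {0} := h ▸ ⟨hx, hx0⟩
      exact le_csSup hTf.bddAbove hxT.1
  exact le_antisymm (key S T hTf hSn hTn hT0 h) (key T S hSf hTn hSn hS0 h.symm)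

end Aux

theorem stmt2 (p q : ℕ) (hp : 0 < p) (d : Fin p → ℕ)
    (hpos : ∀ i, 0 < d i) (hmono : ∀ i j : Fin p, i ≤ j → d j ≤ d i)
    (hq : q = d ⟨0, hp⟩)
    (A : Matrix (Fin p ⊕ Fin q) (Fin p ⊕ Fin q) ℝ)
    (hA : A = Matrix.fromBlocks 0
      (Matrix.of fun (i : Fin p) (j : Fin q) => if (j : ℕ) < d i then (1:ℝ) else 0)
      (Matrix.of fun (i : Fin p) (j : Fin q) => if (j : ℕ) < d i then (1:ℝ) else 0)ᵀ 0)
    (H : Matrix (Fin p) (Fin p) ℝ)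
    (hH : ∀ i j, H i j = ((min (d i) (d j) : ℕ) : ℝ)) :
    specRad A = Real.sqrt (specRad H) := by
  have hq0 : 0 < q := hq ▸ hpos _
  have hnp : Nonempty (Fin p) := ⟨⟨0, hp⟩⟩
  have hnq : Nonempty (Fin q) := ⟨⟨0, hq0⟩⟩
  set B : Matrix (Fin p) (Fin q) ℝ :=
    Matrix.of fun (i : Fin p) (j : Fin q) => if (j : ℕ) < d i then (1:ℝ) else 0 with hB
  -- B * Bᵀ = H
  have hBBt : B * Bᵀ = H := by
    ext i j
    rw [hH]
    simp only [Matrix.mul_apply, Matrix.transpose_apply, hB, Matrix.of_apply]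
    have hent : ∀ k : Fin q, (if (k:ℕ) < d i then (1:ℝ) else 0) *
        (if (k:ℕ) < d j then (1:ℝ) else 0)
        = if (k:ℕ) < min (d i) (d j) then 1 else 0 := by
      intro k
      by_cases h1 : (k:ℕ) < d i <;> by_cases h2 : (k:ℕ) < d j <;>
        simp [h1, h2, lt_min_iff]
    simp_rw [hent]
    rw [Fin.sum_univ_eq_sum_range (fun k => if k < min (d i) (d j) then (1:ℝ) else 0)]
    have hmin : min (d i) (d j) ≤ q := by
      rw [hq]
      exact le_trans (min_le_left _ _) (hmono ⟨0, hp⟩ i (by simp [Fin.le_def]))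
    have hfilt : (Finset.range q).filter (fun k => k < min (d i) (d j))
        = Finset.range (min (d i) (d j)) := by
      ext k
      simp only [Finset.mem_filter, Finset.mem_range]
      exact ⟨fun h => h.2, fun h => ⟨lt_of_lt_of_le h hmin, h⟩⟩
    rw [Finset.sum_ite, Finset.sum_const, Finset.sum_const, hfilt, Finset.card_range]
    simp
  -- A is symmetric
  have hAt : Aᵀ = A := by
    rw [hA, Matrix.fromBlocks_transpose]
    simp
  have hAH : A.IsHermitian := by
    rw [Matrix.IsHermitian, Matrix.conjTranspose_eq_transpose_of_trivial, hAt]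
  -- A * A block diagonal
  have hA2 : A * A = fromBlocks H 0 0 (Bᵀ * B) := by
    rw [hA, Matrix.fromBlocks_multiply]
    simp [hBBt]
  -- positive semidefiniteness
  have hA2psd : (A * A).PosSemidef := by
    have h := Matrix.posSemidef_self_mul_conjTranspose A
    rwa [Matrix.conjTranspose_eq_transpose_of_trivial, hAt] at h
  have hHpsd : H.PosSemidef := by
    have h := Matrix.posSemidef_self_mul_conjTranspose B
    rwa [Matrix.conjTranspose_eq_transpose_of_trivial, hBBt] at h
  have hBtBpsd : (Bᵀ * B).PosSemidef := by
    have h := Matrix.posSemidef_conjTranspose_mul_self B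
    rwa [Matrix.conjTranspose_eq_transpose_of_trivial] at h
  -- spectrum of A*A
  have hspecA2 : spectrum ℝ (A * A) = spectrum ℝ H ∪ spectrum ℝ (Bᵀ * B) := by
    rw [hA2, aux_spectrum_fromBlocks_diag]
  -- nonzero spectra of H and BᵀB agree
  have hnz : spectrum ℝ H \ {0} = spectrum ℝ (Bᵀ * B) \ {0} := by
    have hEF : (fromBlocks 0 B 0 0 : Matrix (Fin p ⊕ Fin q) (Fin p ⊕ Fin q) ℝ) *
        fromBlocks 0 0 Bᵀ 0 = fromBlocks H 0 0 0 := by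
      rw [Matrix.fromBlocks_multiply]
      simp [hBBt]
    have hFE : (fromBlocks 0 0 Bᵀ 0 : Matrix (Fin p ⊕ Fin q) (Fin p ⊕ Fin q) ℝ) *
        fromBlocks 0 B 0 0 = fromBlocks 0 0 0 (Bᵀ * B) := by
      rw [Matrix.fromBlocks_multiply]
      simp
    have hswap := spectrum.nonzero_mul_comm (𝕜 := ℝ)
      (fromBlocks 0 B 0 0 : Matrix (Fin p ⊕ Fin q) (Fin p ⊕ Fin q) ℝ) (fromBlocks 0 0 Bᵀ 0)
    rw [hEF, hFE, aux_spectrum_fromBlocks_diag, aux_spectrum_fromBlocks_diag,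
      spectrum.zero_eq, spectrum.zero_eq, Set.union_diff_distrib, Set.union_diff_distrib,
      Set.diff_self, Set.union_empty, Set.empty_union] at hswap
    exact hswap
  have hdiff : spectrum ℝ (A * A) \ {0} = spectrum ℝ H \ {0} := by
    rw [hspecA2, Set.union_diff_distrib, ← hnz, Set.union_self]
  -- sup equality
  have hsupeq : sSup (spectrum ℝ (A * A)) = sSup (spectrum ℝ H) :=
    aux_csSup_eq (A * A).finite_real_spectrum H.finite_real_spectrum
      (aux_spectrum_nonempty hA2psd.1) (aux_spectrum_nonempty hHpsd.1)
      (aux_spectrum_nonneg hA2psd) (aux_spectrum_nonneg hHpsd) hdiff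
  -- symmetry of spectrum of A
  have hsym : ∀ x ∈ spectrum ℝ A, -x ∈ spectrum ℝ A := by
    set S : Matrix (Fin p ⊕ Fin q) (Fin p ⊕ Fin q) ℝ := fromBlocks 1 0 0 (-1) with hS
    have hSS : S * S = 1 := by
      rw [hS, Matrix.fromBlocks_multiply, ← Matrix.fromBlocks_one]
      congr 1 <;> simp
    have hSAS : S * A * S = -A := by
      rw [hA, hS, Matrix.fromBlocks_multiply, Matrix.fromBlocks_multiply]
      ext (i | i) (j | j) <;> simp [Matrix.fromBlocks]
    intro x hx
    have hconj : spectrum ℝ (S * A * S) = spectrum ℝ A := aux_spectrum_conj S A hSS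
    rw [hSAS] at hconj
    rw [← hconj, ← spectrum.neg_eq]
    exact Set.neg_mem_neg.mpr hx
  set m := sSup (spectrum ℝ A) with hm
  have hAfin := A.finite_real_spectrum
  have hAne : (spectrum ℝ A).Nonempty := aux_spectrum_nonempty hAH
  have hmem : m ∈ spectrum ℝ A := hAne.csSup_mem hAfin
  have hm0 : 0 ≤ m := by
    obtain ⟨x, hx⟩ := hAne
    rcases le_or_gt 0 x with h | h
    · exact le_trans h (le_csSup hAfin.bddAbove hx)
    · exact le_trans (show (0:ℝ) ≤ -x by linarith) (le_csSup hAfin.bddAbove (hsym x hx))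
  have hsq : sSup (spectrum ℝ (A * A)) = m ^ 2 := by
    rw [aux_spectrum_mul_self A hAH]
    apply le_antisymm
    · apply csSup_le (hAne.image _)
      rintro y ⟨x, hx, rfl⟩
      have h1 : x ≤ m := le_csSup hAfin.bddAbove hx
      have h2 : -x ≤ m := le_csSup hAfin.bddAbove (hsym x hx)
      show x ^ 2 ≤ m ^ 2
      nlinarith [mul_nonneg (show (0:ℝ) ≤ m - x by linarith) (show (0:ℝ) ≤ m + x by linarith)]
    · exact le_csSup (hAfin.image _).bddAbove ⟨m, hmem, rfl⟩
  show m = Real.sqrt (sSup (spectrum ℝ H))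
  rw [← hsupeq, hsq, Real.sqrt_sq hm0]
end

section
/- Let p, q, k be positive integers with p > 2 and q > kp + 2, and set e = p(q−k). Then ρ(K^±_{p,q−k})² is the largest root of the cubic polynomial g(x) = x³ − e x² + ((2q−2k−1)(p−1) − 1)x − (p−2)(q−k−1). -/
open Matrix

/-- Ferrers (chain) bipartite adjacency matrix for degree sequence `d` with `q'` columns. -/
noncomputable def adjD (p q' : ℕ) (d : Fin p → ℕ) :
    Matrix (Fin p ⊕ Fin q') (Fin p ⊕ Fin q') ℝ :=
  Matrix.fromBlocks 0 (Matrix.of fun i j => if (j : ℕ) < d i then 1 else 0)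
    (Matrix.of fun (i : Fin p) (j : Fin q') => if (j : ℕ) < d i then (1:ℝ) else 0)ᵀ 0

/-- Degree sequence of `K^±_{p,q-k}`: `(q-k+1, (q-k)^{p-2}, q-k-1)`. -/
def dStar (p q k : ℕ) : Fin p → ℕ :=
  fun i => if (i : ℕ) = 0 then q - k + 1 else if (i : ℕ) = p - 1 then q - k - 1 else q - k

/-- Degree sequence of `ᵉK_{p,q-a}`: `((q-a)^{p-1}, q-a-(k-a)p)`. -/
def dKa (p q k a : ℕ) : Fin p → ℕ :=
  fun i => if (i : ℕ) < p - 1 then q - a else q - a - (k - a) * p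

/-! ### Auxiliary development -/

/-- degree function, reparametrized: `p = t+3`, `q-k = n+2`. -/
def dd (t n : ℕ) (i : Fin (t+3)) : ℕ :=
  if (i : ℕ) = 0 then n+3 else if (i : ℕ) = t+2 then n+1 else n+2

/-- The bipartite block. -/
noncomputable def BB (t n : ℕ) : Matrix (Fin (t+3)) (Fin (n+3)) ℝ :=
  Matrix.of fun i j => if (j : ℕ) < dd t n i then 1 else 0

lemma adjD_eq (t n : ℕ) :
    adjD (t+3) (n+3) (dd t n) = Matrix.fromBlocks 0 (BB t n) (BB t n)ᵀ 0 := rfl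

/-- the piecewise column vector -/
noncomputable def zfun (n : ℕ) (u1 u2 u3 : ℝ) : Fin (n+3) → ℝ :=
  fun j => if (j : ℕ) < n+1 then u1 else if (j : ℕ) = n+1 then u2 else u3

/-- sum of the middle entries of a row vector -/
noncomputable def midsum (t : ℕ) (x : Fin (t+3) → ℝ) : ℝ :=
  ∑ i : Fin (t+1), x (i.succ.castSucc)

lemma BT (t n : ℕ) (x : Fin (t+3) → ℝ) :
    (BB t n)ᵀ.mulVec x
      = zfun n (x 0 + midsum t x + x (Fin.last (t+2))) (x 0 + midsum t x) (x 0) := by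
  funext j
  have hj := j.isLt
  have expand : (BB t n)ᵀ.mulVec x j
      = ∑ i : Fin (t+3), (if (j : ℕ) < dd t n i then (1:ℝ) else 0) * x i := by
    simp [Matrix.mulVec, dotProduct, BB, Matrix.transpose_apply]
  rw [expand, Fin.sum_univ_castSucc, Fin.sum_univ_succ]
  have h0 : dd t n ((0 : Fin (t+2)).castSucc) = n+3 := by
    simp [dd]
  have hlast : dd t n (Fin.last (t+2)) = n+1 := by
    simp [dd]
  have hmid : ∀ i : Fin (t+1), dd t n (i.succ.castSucc) = n+2 := by
    intro i
    have := i.isLt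
    simp only [dd, Fin.coe_castSucc, Fin.val_succ]
    rw [if_neg (by omega), if_neg (by omega)]
  simp only [h0, hlast, hmid]
  rw [← Finset.mul_sum]
  simp only [zfun, midsum, Fin.castSucc_zero]
  split_ifs <;> first | ring1 | (exfalso; omega)

lemma BZ (t n : ℕ) (u1 u2 u3 : ℝ) :
    (BB t n).mulVec (zfun n u1 u2 u3)
      = fun i : Fin (t+3) => if (i : ℕ) = 0 then ((n:ℝ)+1)*u1 + u2 + u3
          else if (i : ℕ) = t+2 then ((n:ℝ)+1)*u1 else ((n:ℝ)+1)*u1 + u2 := by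
  funext i
  have expand : (BB t n).mulVec (zfun n u1 u2 u3) i
      = ∑ j : Fin (n+3), (if (j : ℕ) < dd t n i then (1:ℝ) else 0) * zfun n u1 u2 u3 j := by
    simp [Matrix.mulVec, dotProduct, BB]
  rw [expand, Fin.sum_univ_castSucc, Fin.sum_univ_castSucc]
  have hdd : dd t n i = n+3 ∨ dd t n i = n+1 ∨ dd t n i = n+2 := by
    simp only [dd]; split_ifs <;> simp
  have hin : ∀ j : Fin (n+1),
      (if ((j.castSucc.castSucc : Fin (n+3)) : ℕ) < dd t n i then (1:ℝ) else 0)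
        * zfun n u1 u2 u3 (j.castSucc.castSucc) = u1 := by
    intro j
    have := j.isLt
    simp only [zfun, Fin.coe_castSucc]
    rw [if_pos (by rcases hdd with h|h|h <;> omega), if_pos (by omega), one_mul]
  rw [Finset.sum_congr rfl (fun j _ => hin j), Finset.sum_const]
  simp only [Finset.card_univ, Fintype.card_fin, nsmul_eq_mul, Nat.cast_add, Nat.cast_one]
  have hv1 : (((Fin.last (n+1)).castSucc : Fin (n+3)) : ℕ) = n+1 := rfl
  have hv2 : ((Fin.last (n+2) : Fin (n+3)) : ℕ) = n+2 := rfl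
  simp only [zfun, hv1, hv2]
  by_cases hi0 : (i : ℕ) = 0
  · have hD : dd t n i = n + 3 := by simp [dd, hi0]
    rw [hD, if_pos hi0]
    split_ifs <;> first | ring1 | (exfalso; omega)
  · by_cases hil : (i : ℕ) = t + 2
    · have hD : dd t n i = n + 1 := by simp only [dd]; rw [if_neg hi0, if_pos hil]
      rw [hD, if_neg hi0, if_pos hil]
      split_ifs <;> first | ring1 | (exfalso; omega)
    · have hD : dd t n i = n + 2 := by simp only [dd]; rw [if_neg hi0, if_neg hil]
      rw [hD, if_neg hi0, if_neg hil]
      split_ifs <;> first | ring1 | (exfalso; omega)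

/-- the 3×3 reduced matrix -/
noncomputable def M3 (P M : ℝ) : Matrix (Fin 3) (Fin 3) ℝ :=
  !![M+1, (P-2)*M, M-1; M, (P-2)*M, M-1; M-1, (P-2)*(M-1), M-1]

lemma det3 (P M r : ℝ) :
    (r • (1 : Matrix (Fin 3) (Fin 3) ℝ) - M3 P M).det
      = r^3 - P*M*r^2 + ((2*M-1)*(P-1)-1)*r - (P-2)*(M-1) := by
  rw [Matrix.det_fin_three]
  simp only [M3, Matrix.sub_apply, Matrix.smul_apply, Matrix.one_apply, Matrix.cons_val',
    Matrix.cons_val_zero, Matrix.cons_val_one, Matrix.head_cons, Matrix.empty_val',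
    Matrix.cons_val_fin_one, Matrix.head_fin_const, Matrix.cons_val_two, Matrix.tail_cons,
    Matrix.of_apply, smul_eq_mul]
  norm_num [Fin.ext_iff]
  ring

lemma eigen_of_root (t n : ℕ) (r : ℝ)
    (hroot : r^3 - ((t:ℝ)+3)*((n:ℝ)+2)*r^2 + ((2*((n:ℝ)+2)-1)*((t:ℝ)+2)-1)*r
        - ((t:ℝ)+1)*((n:ℝ)+1) = 0) :
    ∃ x : Fin (t+3) → ℝ, x ≠ 0 ∧ (BB t n).mulVec ((BB t n)ᵀ.mulVec x) = r • x := by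
  have hdet : (r • (1 : Matrix (Fin 3) (Fin 3) ℝ) - M3 ((t:ℝ)+3) ((n:ℝ)+2)).det = 0 := by
    rw [det3]; linear_combination hroot
  obtain ⟨v, hv, hveq⟩ := Matrix.exists_mulVec_eq_zero_iff.2 hdet
  have h0 := congrFun hveq 0
  have h1 := congrFun hveq 1
  have h2 := congrFun hveq 2
  simp only [Matrix.mulVec, dotProduct, Fin.sum_univ_three, M3, Matrix.sub_apply,
    Matrix.smul_apply, Matrix.one_apply, Matrix.cons_val', Matrix.cons_val_zero,
    Matrix.cons_val_one, Matrix.head_cons, Matrix.empty_val', Matrix.cons_val_fin_one,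
    Matrix.head_fin_const, Matrix.cons_val_two, Matrix.tail_cons, Matrix.of_apply,
    smul_eq_mul, Pi.zero_apply] at h0 h1 h2
  norm_num [Fin.ext_iff] at h0 h1 h2
  set x : Fin (t+3) → ℝ :=
    fun i => if (i : ℕ) = 0 then v 0 else if (i : ℕ) = t+2 then v 2 else v 1 with hxdef
  have hx0 : x 0 = v 0 := by simp [hxdef]
  have hxl : x (Fin.last (t+2)) = v 2 := by
    simp only [hxdef, Fin.val_last]
    rw [if_neg (by omega)]
    simp
  have hxm : midsum t x = ((t:ℝ)+1) * v 1 := by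
    have : ∀ i : Fin (t+1), x (i.succ.castSucc) = v 1 := by
      intro i
      have := i.isLt
      simp only [hxdef, Fin.coe_castSucc, Fin.val_succ]
      rw [if_neg (by omega), if_neg (by omega)]
    rw [midsum, Finset.sum_congr rfl (fun i _ => this i), Finset.sum_const]
    simp [mul_comm]
  refine ⟨x, ?_, ?_⟩
  · intro hx
    apply hv
    funext j
    fin_cases j
    · have := congrFun hx 0; rw [hx0] at this; simpa using this
    · have := congrFun hx ⟨1, by omega⟩
      simp only [hxdef] at this
      rw [if_neg (by omega), if_neg (by omega)] at this
      simpa using this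
    · have := congrFun hx (Fin.last (t+2)); rw [hxl] at this; simpa using this
  · rw [BT, hx0, hxl, hxm, BZ]
    funext i
    simp only [Pi.smul_apply, smul_eq_mul]
    by_cases hi0 : (i : ℕ) = 0
    · rw [if_pos hi0]
      have hxi : x i = v 0 := by simp only [hxdef]; rw [if_pos hi0]
      rw [hxi]
      linear_combination -h0
    · rw [if_neg hi0]
      by_cases hil : (i : ℕ) = t+2
      · rw [if_pos hil]
        have hxi : x i = v 2 := by simp only [hxdef]; rw [if_neg hi0, if_pos hil]
        rw [hxi]
        linear_combination -h2
      · rw [if_neg hil]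
        have hxi : x i = v 1 := by simp only [hxdef]; rw [if_neg hi0, if_neg hil]
        rw [hxi]
        linear_combination -h1

lemma root_of_eigen (t n : ℕ) (r : ℝ) (hr : r ≠ 0) (x : Fin (t+3) → ℝ) (hx : x ≠ 0)
    (heig : (BB t n).mulVec ((BB t n)ᵀ.mulVec x) = r • x) :
    r^3 - ((t:ℝ)+3)*((n:ℝ)+2)*r^2 + ((2*((n:ℝ)+2)-1)*((t:ℝ)+2)-1)*r
        - ((t:ℝ)+1)*((n:ℝ)+1) = 0 := by
  rw [BT, BZ] at heig
  have hmid : ∀ i : Fin (t+3), (i : ℕ) ≠ 0 → (i : ℕ) ≠ t+2 →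
      r * x i = ((n:ℝ)+1) * (x 0 + midsum t x + x (Fin.last (t+2))) + (x 0 + midsum t x) := by
    intro i h h'
    have := congrFun heig i
    rw [if_neg h, if_neg h'] at this
    simpa using this.symm
  have h1ne0 : ((⟨1, by omega⟩ : Fin (t+3)) : ℕ) ≠ 0 := by simp
  have h1nel : ((⟨1, by omega⟩ : Fin (t+3)) : ℕ) ≠ t+2 := by simp
  set b := x ⟨1, by omega⟩ with hbdef
  have hb : ∀ i : Fin (t+3), (i : ℕ) ≠ 0 → (i : ℕ) ≠ t+2 → x i = b := by
    intro i h h'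
    apply mul_left_cancel₀ hr
    rw [hmid i h h', hmid ⟨1, by omega⟩ h1ne0 h1nel]
  have hS : midsum t x = ((t:ℝ)+1) * b := by
    have : ∀ i : Fin (t+1), x (i.succ.castSucc) = b := by
      intro i
      have := i.isLt
      exact hb _ (by simp) (by simp [Fin.val_succ]; omega)
    rw [midsum, Finset.sum_congr rfl (fun i _ => this i), Finset.sum_const]
    simp [mul_comm]
  have hA1 : ((n:ℝ)+1) * (x 0 + midsum t x + x (Fin.last (t+2))) + (x 0 + midsum t x) + x 0
      = r * x 0 := by
    have := congrFun heig 0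
    rw [if_pos (show ((0 : Fin (t+3)) : ℕ) = 0 from rfl)] at this
    rw [this]
    simp
  have hA3 : ((n:ℝ)+1) * (x 0 + midsum t x + x (Fin.last (t+2))) = r * x (Fin.last (t+2)) := by
    have := congrFun heig (Fin.last (t+2))
    rw [if_neg (show ¬((Fin.last (t+2) : Fin (t+3)) : ℕ) = 0 by simp),
      if_pos (show ((Fin.last (t+2) : Fin (t+3)) : ℕ) = t+2 from rfl)] at this
    rw [this]
    simp
  have hA2 := hmid ⟨1, by omega⟩ h1ne0 h1nel
  rw [hS] at hA1 hA2 hA3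
  set a := x 0 with hadef
  set c := x (Fin.last (t+2)) with hcdef
  have hvne : ![a, b, c] ≠ 0 := by
    obtain ⟨i, hi⟩ := Function.ne_iff.1 hx
    intro hv
    by_cases hi0 : (i : ℕ) = 0
    · have : i = 0 := Fin.ext hi0
      subst this
      exact hi (by have := congrFun hv 0; simpa [hadef] using this)
    · by_cases hil : (i : ℕ) = t+2
      · have : i = Fin.last (t+2) := Fin.ext hil
        subst this
        exact hi (by have := congrFun hv 2; simpa [hcdef] using this)
      · have hxi : x i = b := hb i hi0 hil
        apply hi
        rw [hxi]
        have := congrFun hv 1; simpa using this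
  have hdet : (r • (1 : Matrix (Fin 3) (Fin 3) ℝ) - M3 ((t:ℝ)+3) ((n:ℝ)+2)).det = 0 := by
    rw [← Matrix.exists_mulVec_eq_zero_iff]
    refine ⟨![a, b, c], hvne, ?_⟩
    have hA2' : r * b = ((n:ℝ)+1) * (a + ((t:ℝ)+1) * b + c) + (a + ((t:ℝ)+1) * b) := by
      rw [hbdef]; exact hA2
    funext j
    fin_cases j <;>
      simp only [Matrix.mulVec, dotProduct, Fin.sum_univ_three, M3, Matrix.sub_apply,
        Matrix.smul_apply, Matrix.one_apply, Matrix.cons_val', Matrix.cons_val_zero,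
        Matrix.cons_val_one, Matrix.head_cons, Matrix.empty_val', Matrix.cons_val_fin_one,
        Matrix.head_fin_const, Matrix.cons_val_two, Matrix.tail_cons, Matrix.of_apply,
        smul_eq_mul, Pi.zero_apply] <;>
      norm_num [Fin.ext_iff] <;>
      [linear_combination -hA1; linear_combination hA2'; linear_combination -hA3]
  rw [det3] at hdet
  linear_combination hdet

lemma mem_spec_iff {d : Type*} [Fintype d] [DecidableEq d] (N : Matrix d d ℝ) (μ : ℝ) :
    μ ∈ spectrum ℝ N ↔ ∃ u, u ≠ 0 ∧ N.mulVec u = μ • u := by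
  rw [spectrum.mem_iff, Algebra.algebraMap_eq_smul_one, Matrix.isUnit_iff_isUnit_det,
    isUnit_iff_ne_zero, not_ne_iff, ← Matrix.exists_mulVec_eq_zero_iff]
  apply exists_congr
  intro v
  apply and_congr_right
  intro _
  rw [Matrix.sub_mulVec, Matrix.smul_mulVec, Matrix.one_mulVec, sub_eq_zero, eq_comm]

lemma main_aux (t n : ℕ) (e c1 c0 : ℝ)
    (he : e = ((t:ℝ)+3)*((n:ℝ)+2))
    (hc1 : c1 = (2*((n:ℝ)+2)-1)*((t:ℝ)+2)-1)
    (hc0 : c0 = ((t:ℝ)+1)*((n:ℝ)+1)) :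
    IsGreatest {x : ℝ | x^3 - e*x^2 + c1*x - c0 = 0}
      ((specRad (adjD (t+3) (n+3) (dd t n)))^2) := by
  have ht0 : (0:ℝ) ≤ (t:ℝ) := Nat.cast_nonneg t
  have hn0 : (0:ℝ) ≤ (n:ℝ) := Nat.cast_nonneg n
  have he1 : (1:ℝ) ≤ e := by rw [he]; nlinarith
  have hc1' : (0:ℝ) ≤ c1 := by rw [hc1]; nlinarith
  have hc0' : (0:ℝ) < c0 := by rw [hc0]; nlinarith
  set S : Set ℝ := {x : ℝ | x^3 - e*x^2 + c1*x - c0 = 0} with hSdef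
  -- finiteness
  have hfin : S.Finite := by
    have hset : S = {x : ℝ | (Polynomial.X^3 - Polynomial.C e * Polynomial.X^2
        + Polynomial.C c1 * Polynomial.X - Polynomial.C c0 : Polynomial ℝ).IsRoot x} := by
      ext x
      simp [hSdef, Polynomial.IsRoot]
    rw [hset]
    apply Polynomial.finite_setOf_isRoot
    intro hzero
    have h3 := congrArg (fun P => Polynomial.coeff P 3) hzero
    simp [Polynomial.coeff_X_pow] at h3
  -- a positive root exists
  have hex : ∃ xp : ℝ, 0 < xp ∧ xp ∈ S := by
    have hcont : ContinuousOn (fun x : ℝ => x^3 - e*x^2 + c1*x - c0) (Set.Icc 0 (e+c1+c0)) :=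
      (by fun_prop : Continuous (fun x : ℝ => x^3 - e*x^2 + c1*x - c0)).continuousOn
    have hX0 : (0:ℝ) ≤ e+c1+c0 := by linarith
    have hiv := intermediate_value_Icc hX0 hcont
    have h0mem : (0:ℝ) ∈ Set.Icc ((fun x : ℝ => x^3 - e*x^2 + c1*x - c0) 0)
        ((fun x : ℝ => x^3 - e*x^2 + c1*x - c0) (e+c1+c0)) := by
      constructor
      · simp only
        nlinarith
      · simp only
        nlinarith [sq_nonneg (e+c1+c0), mul_le_mul_of_nonneg_left he1 (le_of_lt hc0'),
          mul_nonneg (mul_nonneg hc1' hX0) hX0, mul_nonneg hc1' hX0]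
    obtain ⟨xp, hxpI, hxp⟩ := hiv h0mem
    refine ⟨xp, ?_, hxp⟩
    rcases eq_or_lt_of_le hxpI.1 with h | h
    · exfalso
      rw [← h] at hxp
      simp only at hxp
      nlinarith
    · exact h
  obtain ⟨xp, hxppos, hxpS⟩ := hex
  have hSne : S.Nonempty := ⟨xp, hxpS⟩
  -- the greatest root
  set r0 := sSup S with hr0def
  have hr0S : r0 ∈ S := hSne.csSup_mem hfin
  have hub : ∀ y ∈ S, y ≤ r0 := fun y hy => le_csSup hfin.bddAbove hy
  have hr0pos : 0 < r0 := lt_of_lt_of_le hxppos (hub xp hxpS)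
  set lam := Real.sqrt r0 with hlamdef
  have hlampos : 0 < lam := Real.sqrt_pos.2 hr0pos
  have hlam2 : lam^2 = r0 := Real.sq_sqrt hr0pos.le
  -- lam is in the spectrum
  have hr0root : r0^3 - ((t:ℝ)+3)*((n:ℝ)+2)*r0^2 + ((2*((n:ℝ)+2)-1)*((t:ℝ)+2)-1)*r0
      - ((t:ℝ)+1)*((n:ℝ)+1) = 0 := by
    have := hr0S
    rw [hSdef, Set.mem_setOf_eq] at this
    rw [he, hc1, hc0] at this
    linear_combination this
  obtain ⟨x, hxne, hxeig⟩ := eigen_of_root t n r0 hr0root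
  have hlmem : lam ∈ spectrum ℝ (adjD (t+3) (n+3) (dd t n)) := by
    rw [mem_spec_iff]
    refine ⟨Sum.elim x (lam⁻¹ • ((BB t n)ᵀ.mulVec x)), ?_, ?_⟩
    · obtain ⟨i, hi⟩ := Function.ne_iff.1 hxne
      intro hu
      exact hi (by have := congrFun hu (Sum.inl i); simpa using this)
    · rw [adjD_eq, Matrix.fromBlocks_mulVec]
      have hcl : (Sum.elim x (lam⁻¹ • ((BB t n)ᵀ.mulVec x))) ∘ Sum.inl = x := rfl
      have hcr : (Sum.elim x (lam⁻¹ • ((BB t n)ᵀ.mulVec x))) ∘ Sum.inr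
          = lam⁻¹ • ((BB t n)ᵀ.mulVec x) := rfl
      rw [hcl, hcr]
      funext s
      cases s with
      | inl i =>
        simp only [Sum.elim_inl, Pi.add_apply, Matrix.zero_mulVec, Pi.zero_apply, zero_add,
          Pi.smul_apply, smul_eq_mul]
        rw [Matrix.mulVec_smul, hxeig]
        simp only [Pi.smul_apply, smul_eq_mul]
        rw [← hlam2]
        field_simp
      | inr j =>
        simp only [Sum.elim_inr, Pi.add_apply, Matrix.zero_mulVec, Pi.zero_apply, add_zero,
          Pi.smul_apply, smul_eq_mul]
        field_simp
  -- every spectral value is at most lam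
  have hubspec : ∀ μ ∈ spectrum ℝ (adjD (t+3) (n+3) (dd t n)), μ ≤ lam := by
    intro μ hμ
    obtain ⟨u, hu0, huev⟩ := (mem_spec_iff _ _).1 hμ
    rw [adjD_eq, Matrix.fromBlocks_mulVec] at huev
    by_cases hμpos : μ ≤ 0
    · linarith
    push_neg at hμpos
    have h1 : (BB t n).mulVec (u ∘ Sum.inr) = μ • (u ∘ Sum.inl) := by
      funext i
      have := congrFun huev (Sum.inl i)
      simpa [Matrix.zero_mulVec] using this
    have h2 : (BB t n)ᵀ.mulVec (u ∘ Sum.inl) = μ • (u ∘ Sum.inr) := by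
      funext j
      have := congrFun huev (Sum.inr j)
      simpa [Matrix.zero_mulVec] using this
    have hxne : (u ∘ Sum.inl) ≠ 0 := by
      intro hx0
      rw [hx0, Matrix.mulVec_zero] at h2
      have hy0 : (u ∘ Sum.inr) = 0 := by
        rcases smul_eq_zero.1 h2.symm with h | h
        · exact absurd h (ne_of_gt hμpos)
        · exact h
      apply hu0
      funext s
      cases s with
      | inl i => exact congrFun hx0 i
      | inr j => exact congrFun hy0 j
    have heig2 : (BB t n).mulVec ((BB t n)ᵀ.mulVec (u ∘ Sum.inl)) = (μ^2) • (u ∘ Sum.inl) := by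
      rw [h2, Matrix.mulVec_smul, h1, smul_smul]
      ring_nf
    have hroot := root_of_eigen t n (μ^2) (by positivity) (u ∘ Sum.inl) hxne heig2
    have hμ2S : μ^2 ∈ S := by
      rw [hSdef, Set.mem_setOf_eq, he, hc1, hc0]
      linear_combination hroot
    have hμ2 : μ^2 ≤ r0 := hub _ hμ2S
    nlinarith [hlam2]
  -- conclude
  have hspec : specRad (adjD (t+3) (n+3) (dd t n)) = lam := by
    rw [specRad]
    apply le_antisymm
    · exact csSup_le ⟨lam, hlmem⟩ hubspec
    · exact le_csSup ⟨lam, fun y hy => hubspec y hy⟩ hlmem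
  rw [hspec, hlam2]
  exact ⟨hr0S, fun y hy => hub y hy⟩

theorem stmt6 (p q k e : ℕ) (hp : 2 < p) (hk : 0 < k) (hq : k * p + 2 < q)
    (he : e = p * (q - k)) :
    IsGreatest
      {x : ℝ | x^3 - (e : ℝ) * x^2 + ((2*(q:ℝ) - 2*(k:ℝ) - 1) * ((p:ℝ) - 1) - 1) * x
        - ((p:ℝ) - 2) * ((q:ℝ) - (k:ℝ) - 1) = 0}
      ((specRad (adjD p (q - k + 1) (dStar p q k))) ^ 2) := by
  obtain ⟨t, rfl⟩ : ∃ t, p = t + 3 := ⟨p - 3, by omega⟩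
  have hkq : k ≤ q := by
    have : k ≤ k * (t + 3) := Nat.le_mul_of_pos_right k (by omega)
    omega
  have hqk2 : k + 2 ≤ q - k := by
    have h1 : k * (t + 3) = k + k * (t + 2) := by ring
    have h2 : k ≤ k * (t + 2) := Nat.le_mul_of_pos_right k (by omega)
    omega
  obtain ⟨n, hqk⟩ : ∃ n, q - k = n + 2 := ⟨q - k - 2, by omega⟩
  have hcast : (q:ℝ) - (k:ℝ) = (n:ℝ) + 2 := by
    have : ((q - k : ℕ) : ℝ) = (q:ℝ) - (k:ℝ) := Nat.cast_sub hkq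
    rw [← this, hqk]; push_cast; ring
  have hd : dStar (t+3) q k = dd t n := by
    funext i
    simp only [dStar, dd, hqk]
    split_ifs <;> omega
  rw [hd, show q - k + 1 = n + 3 by omega]
  apply main_aux t n
  · rw [he, hqk]; push_cast; ring
  · rw [show (2*(q:ℝ) - 2*(k:ℝ) - 1) = 2*((n:ℝ)+2)-1 by linarith,
      show ((t+3:ℕ):ℝ) - 1 = (t:ℝ)+2 by push_cast; ring]
  · rw [show ((t+3:ℕ):ℝ) - 2 = (t:ℝ)+1 by push_cast; ring,
      show (q:ℝ) - (k:ℝ) - 1 = (n:ℝ)+1 by linarith]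
end

section
/- Let p, q, k be positive integers with p > 2, q > kp + 2, and e = p(q−k). Viewed as real polynomials, f(x) − g(x) = ((p−1)[p(k−a)(q−a−(k−a)p) − 2q + 2k + 1] + 1)x + (p−2)(q−k−1) has positive coefficients for every integer a with 0 ≤ a ≤ k−1; consequently f(x) > g(x) for all x > 0. -/
theorem stmt10 (p q k e : ℕ) (hp : 2 < p) (hk : 0 < k) (hq : k * p + 2 < q)
    (he : e = p * (q - k)) :
    ∀ a : ℕ, a < k →
      (0 < ((p:ℝ)-1) * ((p:ℝ)*((k:ℝ)-(a:ℝ))*((q:ℝ)-(a:ℝ)-((k:ℝ)-(a:ℝ))*(p:ℝ))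
            - 2*(q:ℝ) + 2*(k:ℝ) + 1) + 1) ∧
      (0 < ((p:ℝ)-2)*((q:ℝ)-(k:ℝ)-1)) ∧
      (∀ x : ℝ, 0 < x →
        x^3 - (e:ℝ)*x^2
            + ((k:ℝ)-(a:ℝ))*(p:ℝ)*((p:ℝ)-1)*((q:ℝ)-(a:ℝ)-((k:ℝ)-(a:ℝ))*(p:ℝ))*x
          > x^3 - (e:ℝ)*x^2 + ((2*(q:ℝ)-2*(k:ℝ)-1)*((p:ℝ)-1)-1)*x
            - ((p:ℝ)-2)*((q:ℝ)-(k:ℝ)-1)) := by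
  intro a ha
  have h3 : (3:ℝ) ≤ (p:ℝ) := by exact_mod_cast hp
  have hq3 : (k:ℝ)*(p:ℝ) + 3 ≤ (q:ℝ) := by
    have : k * p + 3 ≤ q := hq
    exact_mod_cast this
  have hm : (1:ℝ) ≤ (k:ℝ) - (a:ℝ) := by
    have : a + 1 ≤ k := ha
    have := (by exact_mod_cast this : (a:ℝ) + 1 ≤ (k:ℝ))
    linarith
  have ha0 : (0:ℝ) ≤ (a:ℝ) := Nat.cast_nonneg a
  have hD : (3:ℝ) ≤ (q:ℝ) - (a:ℝ) - ((k:ℝ)-(a:ℝ))*(p:ℝ) := by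
    nlinarith [mul_nonneg ha0 (by linarith : (0:ℝ) ≤ (p:ℝ) - 1)]
  have h1 : 0 < ((p:ℝ)-1) * ((p:ℝ)*((k:ℝ)-(a:ℝ))*((q:ℝ)-(a:ℝ)-((k:ℝ)-(a:ℝ))*(p:ℝ))
            - 2*(q:ℝ) + 2*(k:ℝ) + 1) + 1 := by
    nlinarith [mul_nonneg (by linarith : (0:ℝ) ≤ (q:ℝ)-(a:ℝ)-((k:ℝ)-(a:ℝ))*(p:ℝ) - 3)
        (by nlinarith : (0:ℝ) ≤ (p:ℝ)*((k:ℝ)-(a:ℝ)) - 2),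
      mul_nonneg (by linarith : (0:ℝ) ≤ (k:ℝ)-(a:ℝ) - 1) (by linarith : (0:ℝ) ≤ (p:ℝ) + 2),
      mul_nonneg (by linarith : (0:ℝ) ≤ (p:ℝ) - 1)
        (mul_nonneg (by linarith : (0:ℝ) ≤ (q:ℝ)-(a:ℝ)-((k:ℝ)-(a:ℝ))*(p:ℝ) - 3)
          (by nlinarith : (0:ℝ) ≤ (p:ℝ)*((k:ℝ)-(a:ℝ)) - 2)),
      mul_nonneg (by linarith : (0:ℝ) ≤ (p:ℝ) - 1)
        (mul_nonneg (by linarith : (0:ℝ) ≤ (k:ℝ)-(a:ℝ) - 1) (by linarith : (0:ℝ) ≤ (p:ℝ) + 2))]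
  have h2 : 0 < ((p:ℝ)-2)*((q:ℝ)-(k:ℝ)-1) := by
    have hk1 : (1:ℝ) ≤ (k:ℝ) := by exact_mod_cast hk
    nlinarith [mul_nonneg (by linarith : (0:ℝ) ≤ (k:ℝ)) (by linarith : (0:ℝ) ≤ (p:ℝ)-1)]
  refine ⟨h1, h2, fun x hx => ?_⟩
  nlinarith [mul_pos h1 hx]
end

section
/- Let p, q, k be positive integers with p > 2 and q > kp + 2, and let e = p(q−k). If s, t are positive integers with s ≤ t and the graph K^e_{s,t} (obtained from K_{s,t} by deleting st − e edges incident to a common vertex in the part of size t) lies in 𝒦(p,q,e), then a contradiction follows; i.e., no graph of the form K^e_{s,t} belongs to 𝒦(p,q,e). -/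
theorem stmt15 (p q k e : ℕ) (hp : 2 < p) (hk : 0 < k) (hq : k * p + 2 < q)
    (he : e = p * (q - k)) :
    ¬ ∃ s t : ℕ, 0 < s ∧ s ≤ t ∧ s ≤ p ∧ t ≤ q ∧ e < s * t ∧ s * t - e < s := by
  rintro ⟨s, t, hs, hst, hsp, htq, h1, h2⟩
  have hkq : k + 1 ≤ q := by nlinarith
  have hm : q - k + k = q := Nat.sub_add_cancel (by omega)
  set m := q - k with hmdef
  have hqm : q = m + k := by omega
  subst he
  have h2' : s * t < p * m + s := by omega
  have hmt : m < t := by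
    by_contra h
    push_neg at h
    have : s * t ≤ p * m := Nat.mul_le_mul hsp h
    omega
  have hsp' : s < p := by
    have : s * (m + 1) ≤ s * t := Nat.mul_le_mul_left s hmt
    nlinarith
  have hle : s * t ≤ (p - 1) * q := by
    calc s * t ≤ s * q := Nat.mul_le_mul_left s htq
    _ ≤ (p - 1) * q := Nat.mul_le_mul_right q (by omega)
  have hp1 : (p - 1) * q + q = p * q := by
    have h1p : 1 ≤ p := by omega
    have := Nat.sub_add_cancel h1p
    nlinarith
  nlinarith [hqm, hp1, hle, h1, hq]
end

section
/- Let p, q, k be positive integers with p > 2, q > kp + 2, and e = p(q−k). The graphs in 𝒦(p,q,e) obtained from a complete bipartite graph by adding one vertex together with a corresponding number of edges are exactly the k graphs ᵉK_{p,q−a} for a = 0, 1, …, k−1. -/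
theorem stmt16 (p q k e : ℕ) (hp : 2 < p) (hk : 0 < k) (hq : k * p + 2 < q)
    (he : e = p * (q - k)) :
    ∀ s t : ℕ, 0 < s → s ≤ t → s ≤ p → t ≤ q →
      (((e < s * t ∧ s * t - e < t) ∨ (e < s * t ∧ s * t - e < s)) ↔
        (s = p ∧ ∃ a < k, t = q - a)) := by
  have hkq : k ≤ q := by
    have h1 : k ≤ k * p := Nat.le_mul_of_pos_right k (by omega)
    linarith
  obtain ⟨d, rfl⟩ := Nat.exists_eq_add_of_le hkq
  have hd : k + d - k = d := by omega
  subst he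
  rw [hd]
  intro s t hs hst hsp htq
  constructor
  · rintro (⟨h1, _⟩ | ⟨h1, _⟩) <;>
    · have hsep : s = p := by
        by_contra hne
        have hslt : s + 1 ≤ p := by omega
        obtain ⟨m, hm⟩ := Nat.exists_eq_add_of_le hslt
        have h3 : s * t ≤ s * (k + d) := Nat.mul_le_mul_left s htq
        have h4 : s * k < d := by
          have e1 : k * p = k * s + k + k * m := by rw [hm]; ring
          have e2 : s * k = k * s := by ring
          linarith [Nat.zero_le (k * m)]
        have e2 : s * (k + d) = s * k + s * d := by ring
        have e3 : p * d = s * d + d + m * d := by rw [hm]; ring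
        linarith [Nat.zero_le (m * d)]
      subst hsep
      have htd : d < t := by
        by_contra hle
        have h5 : s * t ≤ s * d := Nat.mul_le_mul_left s (by omega)
        linarith
      exact ⟨rfl, k + d - t, by omega, by omega⟩
  · rintro ⟨rfl, a, ha, rfl⟩
    left
    have hb : k + d - a = (k - a) + d := by omega
    rw [hb]
    set b := k - a with hbdef
    have hb1 : 1 ≤ b := by omega
    have hbk : b ≤ k := by omega
    have key : s * b < b + d := by
      obtain ⟨c, hc⟩ : ∃ c, s = c + 1 := ⟨s - 1, by omega⟩
      have h5 : c * b ≤ c * k := Nat.mul_le_mul_left c hbk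
      have e1 : s * b = c * b + b := by rw [hc]; ring
      have e2 : k * s = c * k + k := by rw [hc]; ring
      linarith
    have hmul : s * (b + d) = s * b + s * d := by ring
    rw [hmul]
    have hpb : 0 < s * b := by positivity
    refine ⟨by linarith, ?_⟩
    rw [Nat.add_sub_cancel]
    exact key
end
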